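/- Let n ≥ 1, ξ ∈ ℝⁿ, and let w : [0,∞) → ℂ be twice continuously differentiable and satisfy (1+m(ξ))·w''(t) + m(ξ)(1+m(ξ))·w(t) + w'(t) = 0 for all t > 0. Then for all t > 0: (1+m(ξ))|w'(t)|² + m(ξ)(1+m(ξ))|w(t)|² ≤ 6·e^{-ρ(ξ)t/2}·[(1+m(ξ))|w'(0)|² + m(ξ)(1+m(ξ))|w(0)|²]; moreover if ξ ≠ 0 then |w(t)|² ≤ 6·e^{-ρ(ξ)t/2}·(|w'(0)|²/m(ξ) + |w(0)|²) for all t > 0. -/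

import Mathlib

open MeasureTheory Real

noncomputable section

def mlog {n : ℕ} (ξ : EuclideanSpace ℝ (Fin n)) : ℝ := Real.log (1 + ‖ξ‖ ^ 2)

def rho {n : ℕ} (ξ : EuclideanSpace ℝ (Fin n)) : ℝ :=
  min (min ((1/2) * mlog ξ * (1 + mlog ξ)) (1 / (2 * (1 + mlog ξ))))
    ((1/2) * Real.sqrt (mlog ξ))

def ft {n : ℕ} (f : EuclideanSpace ℝ (Fin n) → ℂ) (ξ : EuclideanSpace ℝ (Fin n)) : ℂ :=
  ∫ x, Complex.exp (-Complex.I * ((inner ℝ x ξ : ℝ) : ℂ)) * f x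

def normL1 {n : ℕ} (f : EuclideanSpace ℝ (Fin n) → ℂ) : ℝ := ∫ x, ‖f x‖

def norm11 {n : ℕ} (f : EuclideanSpace ℝ (Fin n) → ℂ) : ℝ :=
  ∫ x, (1 + ‖x‖) * ‖f x‖

def MemL11 {n : ℕ} (f : EuclideanSpace ℝ (Fin n) → ℂ) : Prop :=
  Integrable f ∧ Integrable (fun x => (1 + ‖x‖) * ‖f x‖)

def Ysq {n : ℕ} (f : EuclideanSpace ℝ (Fin n) → ℂ) (δ : ℝ) : ℝ :=
  ∫ ξ, (1 + mlog ξ) ^ δ * ‖ft f ξ‖ ^ 2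

def MemY {n : ℕ} (f : EuclideanSpace ℝ (Fin n) → ℂ) (δ : ℝ) : Prop :=
  Integrable (fun ξ => (1 + mlog ξ) ^ δ * ‖ft f ξ‖ ^ 2)

def IsFourierSol {n : ℕ} (u₀ u₁ : EuclideanSpace ℝ (Fin n) → ℂ)
    (v : ℝ → EuclideanSpace ℝ (Fin n) → ℂ) : Prop :=
  Measurable (Function.uncurry v) ∧
  ∀ ξ, ContDiff ℝ 2 (fun t => v t ξ) ∧
    (∀ t > (0:ℝ), ((1 + mlog ξ : ℝ) : ℂ) * deriv (deriv (fun s => v s ξ)) t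
        + ((mlog ξ * (1 + mlog ξ) : ℝ) : ℂ) * v t ξ + deriv (fun s => v s ξ) t = 0) ∧
    v 0 ξ = ft u₀ ξ ∧ deriv (fun s => v s ξ) 0 = ft u₁ ξ

def PP {n : ℕ} (u₀ u₁ : EuclideanSpace ℝ (Fin n) → ℂ) : ℂ := (∫ x, u₀ x) + ∫ x, u₁ x

def prof1 {n : ℕ} (u₀ u₁ : EuclideanSpace ℝ (Fin n) → ℂ) (t : ℝ)
    (ξ : EuclideanSpace ℝ (Fin n)) : ℂ :=
  PP u₀ u₁ * ((Real.exp (-(t * (mlog ξ * (1 + mlog ξ)))) : ℝ) : ℂ)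

def prof2 {n : ℕ} (u₀ u₁ : EuclideanSpace ℝ (Fin n) → ℂ) (t : ℝ)
    (ξ : EuclideanSpace ℝ (Fin n)) : ℂ :=
  ((Real.exp (-(t / (2 * mlog ξ))) : ℝ) : ℂ) *
    (((Real.sin (Real.sqrt (mlog ξ) * t) / Real.sqrt (mlog ξ) : ℝ) : ℂ) * ft u₁ ξ
      + ((Real.cos (Real.sqrt (mlog ξ) * t) : ℝ) : ℂ) * ft u₀ ξ)

def I0 {n : ℕ} (u₀ u₁ : EuclideanSpace ℝ (Fin n) → ℂ) (l : ℝ) : ℝ :=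
  Real.sqrt (norm11 u₀ ^ 2 + norm11 u₁ ^ 2 + Ysq u₀ (l + 1) + Ysq u₁ l)

/-!
Write `a = 1 + m` and `b = m (1 + m)`, so that the equation is the damped oscillator
`a w'' + b w + w' = 0`, with energy `E = a |w'|² + b |w|²` satisfying `E' = -2 |w'|²`.
The perturbed energy `L = E + 2 ρ a Re (w̄ w')` satisfies `L' ≤ -(ρ / 2) L` as soon as
`2 ρ a ≤ 1`, `2 ρ ≤ b` and `4 ρ² ≤ m`, which is what the three terms of the minimum defining
`ρ` provide; the last condition also gives `E / 2 ≤ L ≤ 3 E / 2`. Hence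
`E t ≤ 2 L t ≤ 2 e^{-ρt/2} L 0 ≤ 3 e^{-ρt/2} E 0`, and the bound on `|w|²` follows on dividing
by `m (1 + m)`. Only the real inner product structure of `ℂ` is used.
-/

open scoped RealInnerProductSpace

lemma le_exp_neg_mul_of_hasDerivAt {f f' : ℝ → ℝ} {c : ℝ} (hf : ∀ s, HasDerivAt f (f' s) s)
    (hdecay : ∀ s > 0, c * f s + f' s ≤ 0) {t : ℝ} (ht : 0 ≤ t) :
    f t ≤ exp (-(c * t)) * f 0 := by
  have hg : ∀ s, HasDerivAt (fun s ↦ exp (c * s) * f s) (exp (c * s) * (c * f s + f' s)) s :=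
    fun s ↦ (((hasDerivAt_id' s).const_mul c).exp.mul (hf s)).congr_deriv (by ring)
  have hanti : AntitoneOn (fun s ↦ exp (c * s) * f s) (Set.Ici 0) := by
    refine antitoneOn_of_hasDerivWithinAt_nonpos (convex_Ici 0)
      (fun s _ ↦ (hg s).continuousAt.continuousWithinAt) (fun s _ ↦ (hg s).hasDerivWithinAt)
      fun s hs ↦ ?_
    rw [interior_Ici] at hs
    exact mul_nonpos_of_nonneg_of_nonpos (exp_pos _).le (hdecay s hs)
  rw [exp_neg, inv_mul_eq_div, le_div_iff₀' (exp_pos _)]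
  simpa using hanti Set.self_mem_Ici ht ht

section DampedOscillator

variable {F : Type*} [NormedAddCommGroup F] [InnerProductSpace ℝ F]

def dampedEnergy (a b : ℝ) (x v : F) : ℝ := a * ‖v‖ ^ 2 + b * ‖x‖ ^ 2

def dampedLyapunov (a b ρ : ℝ) (x v : F) : ℝ := dampedEnergy a b x v + 2 * ρ * a * ⟪x, v⟫

variable {a b ρ : ℝ}

lemma abs_two_mul_inner_le_half_dampedEnergy (ha : 0 ≤ a) (hρb : 4 * ρ ^ 2 * a ≤ b)
    (x v : F) : |2 * ρ * a * ⟪x, v⟫| ≤ dampedEnergy a b x v / 2 := by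
  have hxv : |⟪x, v⟫| ≤ ‖x‖ * ‖v‖ := abs_real_inner_le_norm x v
  have hsq : 4 * |ρ| * a * (‖x‖ * ‖v‖) ≤ a * ‖v‖ ^ 2 + 4 * ρ ^ 2 * a * ‖x‖ ^ 2 := by
    rw [← sq_abs ρ]
    nlinarith [mul_nonneg ha (sq_nonneg (‖v‖ - 2 * |ρ| * ‖x‖))]
  rw [abs_mul, abs_mul, abs_mul, abs_two, abs_of_nonneg ha, dampedEnergy]
  nlinarith [mul_le_mul_of_nonneg_left hxv (mul_nonneg (abs_nonneg ρ) ha),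
    mul_le_mul_of_nonneg_right hρb (sq_nonneg ‖x‖)]

lemma dampedEnergy_le_two_mul_dampedLyapunov (ha : 0 ≤ a) (hρb : 4 * ρ ^ 2 * a ≤ b)
    (x v : F) : dampedEnergy a b x v ≤ 2 * dampedLyapunov a b ρ x v := by
  have := abs_two_mul_inner_le_half_dampedEnergy ha hρb x v
  rw [dampedLyapunov]
  linarith [neg_abs_le (2 * ρ * a * ⟪x, v⟫)]

lemma dampedLyapunov_le_three_halves_mul_dampedEnergy (ha : 0 ≤ a) (hρb : 4 * ρ ^ 2 * a ≤ b)
    (x v : F) : dampedLyapunov a b ρ x v ≤ 3 / 2 * dampedEnergy a b x v := by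
  have := abs_two_mul_inner_le_half_dampedEnergy ha hρb x v
  rw [dampedLyapunov]
  linarith [le_abs_self (2 * ρ * a * ⟪x, v⟫)]

lemma HasDerivAt.dampedLyapunov {x v : ℝ → F} {x' v' : F} {t : ℝ}
    (hx : HasDerivAt x x' t) (hv : HasDerivAt v v' t) :
    HasDerivAt (fun s ↦ dampedLyapunov a b ρ (x s) (v s))
      (a * (2 * ⟪v t, v'⟫) + b * (2 * ⟪x t, x'⟫) + 2 * ρ * a * (⟪x t, v'⟫ + ⟪x', v t⟫)) t :=
  ((hv.norm_sq.const_mul a).add (hx.norm_sq.const_mul b)).add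
    ((hx.inner ℝ hv).const_mul (2 * ρ * a))

/-- The bracket is the derivative of `dampedLyapunov` along a solution of `a x'' + b x + x' = 0`
(see `HasDerivAt.dampedLyapunov`), so this is the differential inequality `L' ≤ -(ρ / 2) L`. -/
lemma dampedLyapunov_decay_rate (hρ : 0 ≤ ρ) (ha : 0 ≤ a) (hρa : 2 * ρ * a ≤ 1)
    (hρb : 2 * ρ ≤ b) {x v acc : F} (hode : a • acc + b • x + v = 0) :
    ρ / 2 * dampedLyapunov a b ρ x v
      + (a * (2 * ⟪v, acc⟫) + b * (2 * ⟪x, v⟫) + 2 * ρ * a * (⟪x, acc⟫ + ⟪v, v⟫)) ≤ 0 := by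
  have hacc : a • acc = -(b • x) - v := by
    rw [← sub_eq_zero, ← hode]; abel
  have hv : a * ⟪v, acc⟫ = -(b * ⟪x, v⟫) - ‖v‖ ^ 2 := by
    rw [← inner_smul_right, hacc, inner_sub_right, inner_neg_right, inner_smul_right,
      real_inner_comm, real_inner_self_eq_norm_sq]
  have hx : a * ⟪x, acc⟫ = -(b * ‖x‖ ^ 2) - ⟪x, v⟫ := by
    rw [← inner_smul_right, hacc, inner_sub_right, inner_neg_right, inner_smul_right,
      real_inner_self_eq_norm_sq]
  have hcross : -((2 * ρ - ρ ^ 2 * a) * ⟪x, v⟫) ≤ 2 * ρ * (‖x‖ * ‖v‖) := by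
    have hk : 0 ≤ 2 * ρ - ρ ^ 2 * a := by nlinarith
    have hc : -⟪x, v⟫ ≤ ‖x‖ * ‖v‖ := by
      linarith [(abs_le.mp (abs_real_inner_le_norm x v)).1]
    have := mul_nonneg (mul_nonneg (sq_nonneg ρ) ha) (mul_nonneg (norm_nonneg x) (norm_nonneg v))
    nlinarith [mul_le_mul_of_nonneg_left hc hk]
  have hform : ρ / 2 * dampedLyapunov a b ρ x v
      + (a * (2 * ⟪v, acc⟫) + b * (2 * ⟪x, v⟫) + 2 * ρ * a * (⟪x, acc⟫ + ⟪v, v⟫))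
      = (5 / 2 * ρ * a - 2) * ‖v‖ ^ 2 - 3 / 2 * ρ * b * ‖x‖ ^ 2
        - (2 * ρ - ρ ^ 2 * a) * ⟪x, v⟫ := by
    rw [real_inner_self_eq_norm_sq, dampedLyapunov, dampedEnergy]
    linear_combination 2 * hv + 2 * ρ * hx
  rw [hform]
  nlinarith [sq_nonneg (‖v‖ - 2 * ρ * ‖x‖), mul_le_mul_of_nonneg_right hρa (sq_nonneg ‖v‖),
    mul_le_mul_of_nonneg_right hρb (mul_nonneg hρ (sq_nonneg ‖x‖)),
    mul_nonneg hρ (mul_nonneg (norm_nonneg x) (norm_nonneg v))]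

theorem dampedEnergy_le_exp_mul (hρ : 0 ≤ ρ) (ha : 0 ≤ a) (hρa : 2 * ρ * a ≤ 1)
    (hρb : 2 * ρ ≤ b) (hρb' : 4 * ρ ^ 2 * a ≤ b) {w : ℝ → F} (hw : Differentiable ℝ w)
    (hw' : Differentiable ℝ (deriv w))
    (hode : ∀ t > 0, a • deriv (deriv w) t + b • w t + deriv w t = 0) {t : ℝ} (ht : 0 ≤ t) :
    dampedEnergy a b (w t) (deriv w t)
      ≤ 3 * exp (-(ρ * t / 2)) * dampedEnergy a b (w 0) (deriv w 0) := by
  have hL := le_exp_neg_mul_of_hasDerivAt (c := ρ / 2)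
    (fun s ↦ (hw s).hasDerivAt.dampedLyapunov (hw' s).hasDerivAt)
    (fun s hs ↦ dampedLyapunov_decay_rate hρ ha hρa hρb (hode s hs)) ht
  rw [div_mul_eq_mul_div] at hL
  calc dampedEnergy a b (w t) (deriv w t)
      ≤ 2 * dampedLyapunov a b ρ (w t) (deriv w t) :=
        dampedEnergy_le_two_mul_dampedLyapunov ha hρb' _ _
    _ ≤ 2 * (exp (-(ρ * t / 2)) * dampedLyapunov a b ρ (w 0) (deriv w 0)) := by gcongr
    _ ≤ 2 * (exp (-(ρ * t / 2)) * (3 / 2 * dampedEnergy a b (w 0) (deriv w 0))) := by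
        gcongr
        exact dampedLyapunov_le_three_halves_mul_dampedEnergy ha hρb' _ _
    _ = 3 * exp (-(ρ * t / 2)) * dampedEnergy a b (w 0) (deriv w 0) := by ring

end DampedOscillator

section LogSymbol

variable {n : ℕ} (ξ : EuclideanSpace ℝ (Fin n))

lemma mlog_nonneg : 0 ≤ mlog ξ :=
  Real.log_nonneg (le_add_of_nonneg_right (sq_nonneg _))

lemma mlog_pos (hξ : ξ ≠ 0) : 0 < mlog ξ :=
  Real.log_pos (lt_add_of_pos_right 1 (pow_pos (norm_pos_iff.2 hξ) 2))

lemma rho_nonneg : 0 ≤ rho ξ := by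
  have hm := mlog_nonneg ξ
  exact le_min (le_min (by positivity) (by positivity)) (by positivity)

lemma two_mul_rho_mul_le_one : 2 * rho ξ * (1 + mlog ξ) ≤ 1 := by
  have hρ : rho ξ ≤ 1 / (2 * (1 + mlog ξ)) := (min_le_left _ _).trans (min_le_right _ _)
  have : 0 < 2 * (1 + mlog ξ) := by linarith [mlog_nonneg ξ]
  rw [le_div_iff₀ this] at hρ
  linarith

lemma two_mul_rho_le : 2 * rho ξ ≤ mlog ξ * (1 + mlog ξ) := by
  have hρ : rho ξ ≤ 1 / 2 * mlog ξ * (1 + mlog ξ) := (min_le_left _ _).trans (min_le_left _ _)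
  linarith

lemma four_mul_rho_sq_le : 4 * rho ξ ^ 2 ≤ mlog ξ := by
  have hρ : rho ξ ≤ 1 / 2 * √(mlog ξ) := min_le_right _ _
  have hsq := Real.sq_sqrt (mlog_nonneg ξ)
  nlinarith [rho_nonneg ξ]

end LogSymbol

theorem pointwise_energy_decay_general (n : ℕ) (ξ : EuclideanSpace ℝ (Fin n))
    (w : ℝ → ℂ) (hw : ContDiff ℝ 2 w)
    (hode : ∀ t > (0:ℝ), ((1 + mlog ξ : ℝ) : ℂ) * deriv (deriv w) t
        + ((mlog ξ * (1 + mlog ξ) : ℝ) : ℂ) * w t + deriv w t = 0) :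
    ∀ t > (0:ℝ),
      ((1 + mlog ξ) * ‖deriv w t‖ ^ 2
          + mlog ξ * (1 + mlog ξ) * ‖w t‖ ^ 2 ≤
        6 * Real.exp (-(rho ξ * t / 2)) *
          ((1 + mlog ξ) * ‖deriv w 0‖ ^ 2
            + mlog ξ * (1 + mlog ξ) * ‖w 0‖ ^ 2)) ∧
      (ξ ≠ 0 →
        ‖w t‖ ^ 2 ≤
          6 * Real.exp (-(rho ξ * t / 2)) *
            (‖deriv w 0‖ ^ 2 / mlog ξ + ‖w 0‖ ^ 2)) := by
  intro t ht
  have hm := mlog_nonneg ξ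
  have hρm : 4 * rho ξ ^ 2 * (1 + mlog ξ) ≤ mlog ξ * (1 + mlog ξ) := by
    gcongr
    exact four_mul_rho_sq_le ξ
  have hode' : ∀ t > 0, (1 + mlog ξ) • deriv (deriv w) t
      + (mlog ξ * (1 + mlog ξ)) • w t + deriv w t = 0 := by
    simpa only [Complex.real_smul] using hode
  have henergy : dampedEnergy (1 + mlog ξ) (mlog ξ * (1 + mlog ξ)) (w t) (deriv w t)
      ≤ 6 * exp (-(rho ξ * t / 2)) * dampedEnergy (1 + mlog ξ) (mlog ξ * (1 + mlog ξ)) (w 0)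
        (deriv w 0) :=
    (dampedEnergy_le_exp_mul (rho_nonneg ξ) (by linarith) (two_mul_rho_mul_le_one ξ)
      (two_mul_rho_le ξ) hρm (hw.differentiable two_ne_zero) hw.differentiable_deriv_two
      hode' ht.le).trans (by unfold dampedEnergy; gcongr; norm_num)
  refine ⟨henergy, fun hξ ↦ ?_⟩
  have hm₀ := mlog_pos ξ hξ
  refine le_of_mul_le_mul_left ?_ (by positivity : 0 < mlog ξ * (1 + mlog ξ))
  calc mlog ξ * (1 + mlog ξ) * ‖w t‖ ^ 2 ≤ dampedEnergy _ _ (w t) (deriv w t) := by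
        unfold dampedEnergy; nlinarith [sq_nonneg ‖deriv w t‖]
    _ ≤ _ := henergy
    _ = _ := by unfold dampedEnergy; field_simp

theorem pointwise_energy_decay (n : ℕ) (hn : 1 ≤ n) (ξ : EuclideanSpace ℝ (Fin n))
    (w : ℝ → ℂ) (hw : ContDiff ℝ 2 w)
    (hode : ∀ t > (0:ℝ), ((1 + mlog ξ : ℝ) : ℂ) * deriv (deriv w) t
        + ((mlog ξ * (1 + mlog ξ) : ℝ) : ℂ) * w t + deriv w t = 0) :
    ∀ t > (0:ℝ),
      ((1 + mlog ξ) * ‖deriv w t‖ ^ 2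
          + mlog ξ * (1 + mlog ξ) * ‖w t‖ ^ 2 ≤
        6 * Real.exp (-(rho ξ * t / 2)) *
          ((1 + mlog ξ) * ‖deriv w 0‖ ^ 2
            + mlog ξ * (1 + mlog ξ) * ‖w 0‖ ^ 2)) ∧
      (ξ ≠ 0 →
        ‖w t‖ ^ 2 ≤
          6 * Real.exp (-(rho ξ * t / 2)) *
            (‖deriv w 0‖ ^ 2 / mlog ξ + ‖w 0‖ ^ 2)) :=
  pointwise_energy_decay_general n ξ w hw hode
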